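/- For every even integer w ≥ 2, the number of natural numbers n with n ≥ (w² − w)/2 that do not belong to the additive submonoid Γ_{w,w+1} of ℕ generated by w and w+1 is exactly (w² + 2w)/8; that is, the gap-counting function I_{w,w+1}(j) = #(ℤ_{≥j} ∖ Γ_{w,w+1}) satisfies I_{w,w+1}((w² − w)/2) = (w² + 2w)/8. -/

import Mathlib

/-!
Writing `n = q w + r` with `r < w`, `n` lies in `⟨w, w + 1⟩` exactly when `r ≤ q`, because
`i w + j (w + 1) = (i + j) w + j`. So the gaps with quotient at least `k` are the numbers
`q w + r` with `k ≤ q < r < w`, and there are `(w - k).choose 2` of them. Each of them has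
remainder at least `k + 1`, hence is at least `k w + k + 1`, which is `(w² - w) / 2` for
`w = 2 (k + 1)`. So the gaps above `(w² - w) / 2` are those with quotient at least `k`, and there
are `(k + 2).choose 2 = (w² + 2w) / 8` of them.
-/

open Finset

theorem mem_closure_pair_self_succ_iff {w : ℕ} (hw : 0 < w) (n : ℕ) :
    n ∈ AddSubmonoid.closure ({w, w + 1} : Set ℕ) ↔ n % w ≤ n / w := by
  rw [AddSubmonoid.mem_closure_pair]
  constructor
  · rintro ⟨i, j, rfl⟩
    have hn : i • w + j • (w + 1) = j + (i + j) * w := by simp only [smul_eq_mul]; ring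
    rw [hn, Nat.add_mul_mod_self_right, Nat.add_mul_div_right _ _ hw]
    exact (Nat.mod_le j w).trans (le_add_left (Nat.le_add_left j i))
  · intro h
    obtain ⟨d, hd⟩ := Nat.exists_eq_add_of_le h
    refine ⟨d, n % w, ?_⟩
    calc d • w + (n % w) • (w + 1) = n % w + (n % w + d) * w := by simp only [smul_eq_mul]; ring
      _ = n := by rw [← hd, Nat.mod_add_div']

theorem gaps_ge_mul_eq_image {w : ℕ} (hw : 0 < w) (k : ℕ) :
    {n : ℕ | k * w ≤ n ∧ n ∉ AddSubmonoid.closure ({w, w + 1} : Set ℕ)} =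
      ((range (w - k)).sigma fun i => range i).image fun p => (k + p.1) + w * (k + p.2) := by
  ext n
  simp only [Set.mem_ofPred_eq, coe_image, Set.mem_image, mem_coe, mem_sigma, mem_range,
    mem_closure_pair_self_succ_iff hw, not_le, ← Nat.le_div_iff_mul_le hw]
  constructor
  · rintro ⟨hk, hgap⟩
    have hr : n % w < w := Nat.mod_lt n hw
    refine ⟨⟨n % w - k, n / w - k⟩, ?_, ?_⟩ <;> dsimp only
    · omega
    rw [Nat.add_sub_cancel' (by omega), Nat.add_sub_cancel' hk, Nat.mod_add_div]
  · rintro ⟨⟨i, j⟩, ⟨hi, hj⟩, rfl⟩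
    dsimp only at hi hj ⊢
    obtain ⟨hdiv, hmod⟩ :=
      (Nat.div_mod_unique (c := k + i) (d := k + j) hw).2 ⟨rfl, by omega⟩
    rw [hmod, hdiv]
    omega

theorem ncard_gaps_ge_mul {w : ℕ} (hw : 0 < w) (k : ℕ) :
    {n : ℕ | k * w ≤ n ∧ n ∉ AddSubmonoid.closure ({w, w + 1} : Set ℕ)}.ncard =
      (w - k).choose 2 := by
  rw [gaps_ge_mul_eq_image hw, Set.ncard_coe_finset, card_image_of_injOn, card_sigma]
  · simp only [card_range, sum_range_id, Nat.choose_two_right]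
  · refine Set.LeftInvOn.injOn (f₁' := fun n => ⟨n % w - k, n / w - k⟩) ?_
    rintro ⟨i, j⟩ hp
    simp only [coe_sigma, Set.mem_sigma_iff, coe_range, Set.mem_Iio] at hp
    obtain ⟨hdiv, hmod⟩ :=
      (Nat.div_mod_unique (c := k + i) (d := k + j) hw).2 ⟨rfl, by omega⟩
    simp only [hdiv, hmod, Nat.add_sub_cancel_left]

theorem gaps_ge_mul_add_succ_eq {w : ℕ} (hw : 0 < w) (k : ℕ) :
    {n : ℕ | k * w + (k + 1) ≤ n ∧ n ∉ AddSubmonoid.closure ({w, w + 1} : Set ℕ)} =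
      {n : ℕ | k * w ≤ n ∧ n ∉ AddSubmonoid.closure ({w, w + 1} : Set ℕ)} := by
  ext n
  simp only [Set.mem_ofPred_eq, mem_closure_pair_self_succ_iff hw, not_le]
  refine ⟨fun ⟨hn, hgap⟩ => ⟨by omega, hgap⟩, fun ⟨hn, hgap⟩ => ⟨?_, hgap⟩⟩
  have hq : k ≤ n / w := (Nat.le_div_iff_mul_le hw).2 hn
  calc k * w + (k + 1) ≤ n / w * w + n % w := by gcongr; omega
    _ = n := Nat.div_add_mod' n w

theorem gap_count_V0 (w : ℕ) (hw : 2 ≤ w) (hweven : Even w) :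
    {n : ℕ | (w ^ 2 - w) / 2 ≤ n ∧ n ∉ AddSubmonoid.closure ({w, w + 1} : Set ℕ)}.ncard =
      (w ^ 2 + 2 * w) / 8 := by
  obtain ⟨k, rfl⟩ : ∃ k, w = 2 * (k + 1) := by
    obtain ⟨r, rfl⟩ := hweven
    exact ⟨r - 1, by omega⟩
  have hpos : 0 < 2 * (k + 1) := by omega
  have hstart : ((2 * (k + 1)) ^ 2 - 2 * (k + 1)) / 2 = k * (2 * (k + 1)) + (k + 1) := by
    have hsq : (2 * (k + 1)) ^ 2 = 2 * (k * (2 * (k + 1)) + (k + 1)) + 2 * (k + 1) := by ring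
    rw [Nat.sub_eq_of_eq_add hsq]
    omega
  have hcount : ((2 * (k + 1)) ^ 2 + 2 * (2 * (k + 1))) / 8 = (k + 2).choose 2 := by
    have hsum : (2 * (k + 1)) ^ 2 + 2 * (2 * (k + 1)) = 4 * ((k + 2) * (k + 1)) := by ring
    rw [Nat.choose_two_right, show k + 2 - 1 = k + 1 from rfl, hsum]
    omega
  rw [hstart, hcount, gaps_ge_mul_add_succ_eq hpos, ncard_gaps_ge_mul hpos]
  congr 1
  omega
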